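/- arXiv:1906.07121 — 4 statements merged into one kernel-verified Lean document; each statement's English description precedes it below -/
import Mathlib

section
/- Let 𝒪 be an order in an imaginary quadratic field K of discriminant Δ, and let I be an ideal of 𝒪 which is primitive (the additive quotient group 𝒪/I is cyclic), proper (its multiplier ring {x ∈ K : xI ⊆ I} equals 𝒪), and real (stable under complex conjugation). If I has index N in 𝒪, then N divides Δ. -/
/-!
Since `Δ < 0`, the root `τ` of `X² - ΔX + (Δ² - Δ)/4` is irrational, hence generates `K` over `ℚ`,
so the nontrivial automorphism `σ` sends `τ` to its conjugate `Δ - τ` and restricts to `𝒪 = ℤ[τ]`.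
A ring whose additive group is cyclic is a quotient of `ℤ`, so `𝒪/I ≅ ℤ/N` and `τ ≡ -b (mod I)`
for an integer `b`. As `I` is real, `b + τ` and `b + Δ - τ` both lie in `I`, hence `N` divides
their sum `2b + Δ` and their product `b² + Δb + (Δ² - Δ)/4`, and therefore also
`Δ = (2b + Δ)² - 4(b² + Δb + (Δ² - Δ)/4)`.
-/

variable {K : Type*} [Field K]

/-- An ideal `I` of an order `O` in a quadratic field is *primitive*
if the additive quotient group `O/I` is cyclic. -/
def IsPrimitiveIdeal (O : Subring K) (I : Ideal O) : Prop :=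
  IsAddCyclic (O ⧸ I)

/-- An ideal `I` of an order `O ⊆ K` is *proper* if its multiplier ring
`{x ∈ K : xI ⊆ I}` equals `O`. -/
def IsProperIdeal (O : Subring K) (I : Ideal O) : Prop :=
  ∀ x : K, (∀ y : O, y ∈ I → ∃ z : O, z ∈ I ∧ (z : K) = x * (y : K)) ↔ x ∈ O

/-- An ideal `I` of an order `O ⊆ K` is *real* (with respect to the nontrivial automorphism
`σ` of `K`, i.e. complex conjugation) if it is stable under `σ`. -/
def IsRealIdeal (σ : K →+* K) (O : Subring K) (I : Ideal O) : Prop :=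
  ∀ y : O, y ∈ I → ∃ z : O, z ∈ I ∧ (z : K) = σ (y : K)

theorem IsAddCyclic.intCast_surjective (R : Type*) [Ring R] [IsAddCyclic R] :
    Function.Surjective (Int.cast : ℤ → R) := by
  obtain ⟨g, hg⟩ := IsAddCyclic.exists_generator (α := R)
  obtain ⟨k, hk⟩ := AddSubgroup.mem_zmultiples_iff.mp (hg 1)
  obtain ⟨l, hl⟩ := AddSubgroup.mem_zmultiples_iff.mp (hg (g * g))
  have hg_int : ((l : ℤ) : R) = g :=
    calc ((l : ℤ) : R) = l • (k • g) := by rw [hk, zsmul_one]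
      _ = k • (l • g) := smul_comm l k g
      _ = (k • g) * g := by rw [hl, smul_mul_assoc]
      _ = g := by rw [hk, one_mul]
  intro x
  obtain ⟨m, rfl⟩ := AddSubgroup.mem_zmultiples_iff.mp (hg x)
  exact ⟨m * l, by rw [Int.cast_mul, hg_int, zsmul_eq_mul]⟩

theorem IsAddCyclic.ringChar_eq_natCard (R : Type*) [Ring R] [IsAddCyclic R] :
    ringChar R = Nat.card R := by
  have hbij : Function.Bijective (ZMod.castHom (dvd_refl (ringChar R)) R) := by
    refine ⟨ZMod.castHom_injective R, fun x => ?_⟩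
    obtain ⟨m, rfl⟩ := IsAddCyclic.intCast_surjective R x
    exact ⟨m, map_intCast _ m⟩
  rw [← Nat.card_eq_of_bijective _ hbij, Nat.card_zmod]

theorem Int.four_dvd_sq_sub_self {d : ℤ} (hd : d % 4 = 0 ∨ d % 4 = 1) : 4 ∣ d ^ 2 - d := by
  obtain ⟨k, hk⟩ : ∃ k, d = 4 * k + d % 4 := ⟨d / 4, by omega⟩
  rcases hd with h | h <;> rw [h] at hk <;> subst hk
  · exact ⟨4 * k ^ 2 - k, by ring⟩
  · exact ⟨4 * k ^ 2 + k, by ring⟩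

theorem Ideal.natCard_quotient_dvd_sq_sub_four_mul {R : Type*} [CommRing R] {I : Ideal R}
    [IsAddCyclic (R ⧸ I)] {σ : R →+* R} (hI : ∀ y ∈ I, σ y ∈ I) {t : R} {s n : ℤ}
    (ht : t ^ 2 - s * t + n = 0) (hσt : σ t = s - t) :
    (Nat.card (R ⧸ I) : ℤ) ∣ s ^ 2 - 4 * n := by
  have : CharP (R ⧸ I) (Nat.card (R ⧸ I)) :=
    IsAddCyclic.ringChar_eq_natCard (R ⧸ I) ▸ ringChar.charP _
  set N := Nat.card (R ⧸ I)
  have hmem (m : ℤ) : (m : R) ∈ I ↔ (N : ℤ) ∣ m := by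
    rw [← Ideal.Quotient.eq_zero_iff_mem, map_intCast, CharP.intCast_eq_zero_iff _ N]
  obtain ⟨b, hb⟩ := IsAddCyclic.intCast_surjective (R ⧸ I) (Ideal.Quotient.mk I (-t))
  have hbt : (b : R) + t ∈ I := by
    simpa using Ideal.Quotient.eq.mp ((map_intCast _ b).trans hb)
  have hbσt : (b : R) + σ t ∈ I := by simpa using hI _ hbt
  have hnorm : (N : ℤ) ∣ b ^ 2 + s * b + n := by
    rw [← hmem]
    convert I.mul_mem_right ((b : R) + σ t) hbt using 1
    push_cast
    linear_combination ht - ((b : R) + t) * hσt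
  have htrace : (N : ℤ) ∣ 2 * b + s := by
    rw [← hmem]
    convert I.add_mem hbt hbσt using 1
    push_cast
    linear_combination (-1 : R) * hσt
  have hdisc : s ^ 2 - 4 * n = (2 * b + s) ^ 2 - 4 * (b ^ 2 + s * b + n) := by ring
  rw [hdisc]
  exact dvd_sub (dvd_pow htrace two_ne_zero) (dvd_mul_of_dvd_right hnorm 4)

theorem notMem_bot_of_sq_sub_mul_add_eq_zero [Algebra ℚ K] {s n : ℤ} (hdisc : s ^ 2 - 4 * n < 0)
    {τ : K} (hτ : τ ^ 2 - s * τ + n = 0) : τ ∉ (⊥ : Subalgebra ℚ K) := by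
  intro h
  obtain ⟨q, rfl⟩ := Algebra.mem_bot.mp h
  have hq : q ^ 2 - s * q + n = 0 := by
    apply (algebraMap ℚ K).injective
    rwa [map_add, map_sub, map_mul, map_pow, map_intCast, map_intCast, map_zero]
  have hdisc' : (s : ℚ) ^ 2 - 4 * n < 0 := by exact_mod_cast hdisc
  nlinarith [sq_nonneg (2 * q - s)]

theorem RingHom.eq_id_of_map_eq_self_of_finrank_eq_two [Algebra ℚ K]
    (hdim : Module.finrank ℚ K = 2) {τ : K} (hτ : τ ∉ (⊥ : Subalgebra ℚ K)) {σ : K →+* K}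
    (hσ : σ τ = τ) : σ = RingHom.id K := by
  have htop : Algebra.adjoin ℚ {τ} = ⊤ :=
    ((Subalgebra.isSimpleOrder_of_finrank_prime ℚ K (hdim ▸ Nat.prime_two)).eq_bot_or_eq_top
      _).resolve_left fun h => hτ (h ▸ Algebra.subset_adjoin rfl)
  have hσ_alg := AlgHom.ext_of_adjoin_eq_top htop (φ₁ := σ.toRatAlgHom) (φ₂ := AlgHom.id ℚ K)
    (by simpa using hσ)
  ext x
  exact congr($hσ_alg x)

theorem RingHom.map_eq_sub_of_map_ne {R : Type*} [CommRing R] [IsDomain R] (σ : R →+* R)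
    {s n : ℤ} {τ : R} (hτ : τ ^ 2 - s * τ + n = 0) (hne : σ τ ≠ τ) : σ τ = s - τ := by
  have hστ : σ τ ^ 2 - s * σ τ + n = 0 := by simpa using congrArg σ hτ
  have : (σ τ - τ) * (σ τ - (s - τ)) = 0 := by linear_combination hστ - hτ
  exact sub_eq_zero.mp ((mul_eq_zero.mp this).resolve_left (sub_ne_zero.mpr hne))

theorem index_dvd_disc_of_primitive_proper_real_general
    (K : Type*) [Field K] [Algebra ℚ K]
    (hdim : Module.finrank ℚ K = 2)
    (σ : K →+* K) (hσ : σ ≠ RingHom.id K)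
    (Δ : ℤ) (hΔneg : Δ < 0) (hΔmod : Δ % 4 = 0 ∨ Δ % 4 = 1)
    (τ : K) (hτ : τ ^ 2 - (Δ : K) * τ + (((Δ ^ 2 - Δ) / 4 : ℤ) : K) = 0)
    (I : Ideal (Subring.closure {τ} : Subring K))
    (hprim : IsPrimitiveIdeal (Subring.closure {τ}) I)
    (hreal : IsRealIdeal σ (Subring.closure {τ}) I)
    (N : ℕ)
    (hindex : Nat.card ((Subring.closure {τ} : Subring K) ⧸ I) = N) :
    (N : ℤ) ∣ Δ := by
  set n := (Δ ^ 2 - Δ) / 4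
  have hdisc : Δ ^ 2 - 4 * n = Δ := by
    have := Int.mul_ediv_cancel' (Int.four_dvd_sq_sub_self hΔmod); omega
  have hστ : σ τ = Δ - τ := σ.map_eq_sub_of_map_ne hτ fun h => hσ <|
    RingHom.eq_id_of_map_eq_self_of_finrank_eq_two hdim
      (notMem_bot_of_sq_sub_mul_add_eq_zero (hdisc.symm ▸ hΔneg) hτ) h
  have hτO : τ ∈ Subring.closure {τ} := Subring.subset_closure rfl
  have hστO : σ τ ∈ Subring.closure {τ} := hστ ▸ sub_mem (intCast_mem _ Δ) hτO
  have hσO : ∀ x ∈ Subring.closure {τ}, σ x ∈ Subring.closure {τ} := fun x hx =>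
    (Subring.closure_le (t := (Subring.closure {τ}).comap σ)).mpr
      (Set.singleton_subset_iff.mpr hστO) hx
  have : IsAddCyclic (Subring.closure {τ} ⧸ I) := hprim
  have hI : ∀ y ∈ I, σ.restrict _ _ hσO y ∈ I := fun y hy => by
    obtain ⟨z, hz, hzy⟩ := hreal y hy
    rwa [show σ.restrict _ _ hσO y = z from Subtype.ext hzy.symm]
  have hdvd := Ideal.natCard_quotient_dvd_sq_sub_four_mul hI (t := ⟨τ, hτO⟩) (s := Δ) (n := n)
    (Subtype.ext (by simpa using hτ)) (Subtype.ext (by simpa using hστ))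
  rwa [hindex, hdisc] at hdvd

/-- Let `𝒪 = ℤ[τ]` be the order of discriminant `Δ` in an imaginary quadratic
field `K` with complex conjugation `σ`.  If `I` is a primitive, proper, real ideal of `𝒪`
of index `N`, then `N ∣ Δ`. -/
theorem index_dvd_disc_of_primitive_proper_real
    (K : Type*) [Field K] [Algebra ℚ K]
    (hdim : Module.finrank ℚ K = 2) (himag : IsEmpty (K →+* ℝ))
    (σ : K →+* K) (hσ : σ ≠ RingHom.id K)
    (Δ : ℤ) (hΔneg : Δ < 0) (hΔmod : Δ % 4 = 0 ∨ Δ % 4 = 1)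
    (τ : K) (hτ : τ ^ 2 - (Δ : K) * τ + (((Δ ^ 2 - Δ) / 4 : ℤ) : K) = 0)
    (I : Ideal (Subring.closure {τ} : Subring K))
    (hprim : IsPrimitiveIdeal (Subring.closure {τ}) I)
    (hprop : IsProperIdeal (Subring.closure {τ}) I)
    (hreal : IsRealIdeal σ (Subring.closure {τ}) I)
    (N : ℕ) (hN : 0 < N)
    (hindex : Nat.card ((Subring.closure {τ} : Subring K) ⧸ I) = N) :
    (N : ℤ) ∣ Δ :=
  index_dvd_disc_of_primitive_proper_real_general K hdim σ hσ Δ hΔneg hΔmod τ hτ I hprim hreal N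
    hindex
end

section
/- Let 𝒪 be an order in an imaginary quadratic field, and let N = ℓ₁^{a₁} ⋯ ℓ_r^{a_r} be the prime factorization of a positive integer N. Then there exists a primitive, proper, real ideal of 𝒪 of index N if and only if for each i with 1 ≤ i ≤ r there exists a primitive, proper, real ideal of 𝒪 of index ℓ_i^{a_i}. -/
variable {K : Type*} [Field K]

/-!
An ideal `I` of `ℤ[τ]` with `ℤ[τ]/I` cyclic of order `M` is `ℤ M + ℤ (τ - m)` for an integer `m`
with `m² + b m + c ≡ 0 (mod M)`. As `σ τ = -b - τ`, it is real iff `b + 2 m ≡ 0 (mod M)`, and then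
it is proper iff `(m² + b m + c) / M` is prime to `M`: a common prime factor `p` would make
`(τ - m) / p` a multiplier of `I`. These conditions on `m` only depend on `m` modulo `M²`, and they
hold modulo `M₁ M₂` for coprime `M₁`, `M₂` iff they hold modulo `M₁` and modulo `M₂`, so the Chinese
remainder theorem glues solutions for the prime powers of `N` into one for `N`.
-/

theorem charP_natCard_of_isAddCyclic (R : Type*) [Ring R] [Finite R] [IsAddCyclic R] :
    CharP R (Nat.card R) := by
  suffices addOrderOf (1 : R) = Nat.card R from this ▸ CharP.addOrderOf_one R
  refine Nat.dvd_antisymm (addOrderOf_dvd_natCard 1) ?_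
  rw [← IsAddCyclic.exponent_eq_card]
  refine AddMonoid.exponent_dvd_of_forall_nsmul_eq_zero fun g ↦ ?_
  rw [← one_mul g, ← smul_mul_assoc, addOrderOf_nsmul_eq_zero, zero_mul]

theorem Nat.iff_forall_primeFactors_of_coprime_mul {P : ℕ → Prop} (h₁ : P 1)
    (hmul : ∀ a b, 0 < b → a.Coprime b → (P (a * b) ↔ P a ∧ P b)) {n : ℕ} (hn : n ≠ 0) :
    P n ↔ ∀ p ∈ n.primeFactors, P (p ^ n.factorization p) := by
  suffices ∀ s ⊆ n.primeFactors,
      (P (∏ p ∈ s, p ^ n.factorization p) ↔ ∀ p ∈ s, P (p ^ n.factorization p)) by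
    rw [← this _ subset_rfl, ← Nat.support_factorization, ← Finsupp.prod,
      Nat.prod_factorization_pow_eq_self hn]
  intro s hs
  induction s using Finset.induction_on with
  | empty => simpa using h₁
  | insert q s hq ih =>
    have hprime : ∀ p ∈ insert q s, p.Prime := fun p hp ↦ Nat.prime_of_mem_primeFactors (hs hp)
    rw [Finset.prod_insert hq, Finset.forall_mem_insert, ← ih ((Finset.subset_insert q s).trans hs),
      hmul]
    · exact Finset.prod_pos fun p hp ↦ pow_pos (hprime p (Finset.mem_insert_of_mem hp)).pos _
    · exact Nat.Coprime.prod_right fun p hp ↦ Nat.coprime_pow_primes _ _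
        (hprime q (Finset.mem_insert_self q s)) (hprime p (Finset.mem_insert_of_mem hp))
        (ne_of_mem_of_not_mem hp hq).symm

theorem RingHom.eq_id_of_map_eq_self [Algebra ℚ K] (hdim : Module.finrank ℚ K = 2) {τ : K}
    (hirr : τ ∉ Set.range (algebraMap ℚ K)) {σ : K →+* K} (hστ : σ τ = τ) : σ = RingHom.id K := by
  have hli : LinearIndependent ℚ ![1, τ] :=
    (LinearIndependent.pair_iff' one_ne_zero).2 fun a ha ↦
      hirr ⟨a, by simpa [Algebra.smul_def] using ha⟩
  have hspan := hli.span_eq_top_of_card_eq_finrank (by simp [hdim])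
  have h := LinearMap.ext_on_range hspan (f := σ.toRatAlgHom.toLinearMap) (g := LinearMap.id)
    (fun i ↦ by fin_cases i <;> simp [hστ])
  exact RingHom.ext (LinearMap.congr_fun h)

theorem map_eq_neg_sub_of_ne_id [Algebra ℚ K] (hdim : Module.finrank ℚ K = 2) {σ : K →+* K}
    (hσ : σ ≠ RingHom.id K) {τ : K} {b c : ℤ} (hτ : τ ^ 2 + b * τ + c = 0)
    (hirr : τ ∉ Set.range (algebraMap ℚ K)) : σ τ = -b - τ := by
  have hστ : (σ τ) ^ 2 + b * σ τ + c = 0 := by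
    simpa only [map_add, map_mul, map_pow, map_intCast, map_zero] using congrArg σ hτ
  have : (σ τ - τ) * (σ τ - (-b - τ)) = 0 := by linear_combination hστ - hτ
  rcases mul_eq_zero.1 this with h | h
  · exact absurd (RingHom.eq_id_of_map_eq_self hdim hirr (sub_eq_zero.1 h)) hσ
  · exact sub_eq_zero.1 h

namespace QuadraticOrder

/-- For `M > 0` these are the `m` for which `M ℤ + (τ - m) ℤ` is a primitive, proper, real ideal of
`ℤ[τ]` of index `M`. -/
def AdmissibleRoot (b c M m : ℤ) : Prop :=
  M ∣ b + 2 * m ∧ ∃ k, m ^ 2 + b * m + c = M * k ∧ IsCoprime M k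

section Admissible

variable {b c M M₁ M₂ m : ℤ}

theorem AdmissibleRoot.add_mul_sq (h : AdmissibleRoot b c M m) (s : ℤ) :
    AdmissibleRoot b c M (m + M ^ 2 * s) := by
  obtain ⟨⟨t, ht⟩, k, hk, hcop⟩ := h
  refine ⟨⟨t + 2 * M * s, by linear_combination ht⟩, k + M * (M * t * s + M ^ 2 * s ^ 2),
    by linear_combination hk + M ^ 2 * s * ht, hcop.add_mul_left_right _⟩

theorem AdmissibleRoot.of_mul (h : AdmissibleRoot b c (M₁ * M₂) m) (hcop : IsCoprime M₁ M₂) :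
    AdmissibleRoot b c M₁ m := by
  obtain ⟨hb, k, hk, hkcop⟩ := h
  exact ⟨(dvd_mul_right _ _).trans hb, M₂ * k, by rw [hk, mul_assoc],
    hcop.mul_right hkcop.of_mul_left_left⟩

theorem AdmissibleRoot.mul (h₁ : AdmissibleRoot b c M₁ m) (h₂ : AdmissibleRoot b c M₂ m)
    (hcop : IsCoprime M₁ M₂) (hM₂ : M₂ ≠ 0) : AdmissibleRoot b c (M₁ * M₂) m := by
  obtain ⟨hb₁, k₁, hk₁, hcop₁⟩ := h₁
  obtain ⟨hb₂, k₂, hk₂, hcop₂⟩ := h₂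
  obtain ⟨k, rfl⟩ : M₂ ∣ k₁ := hcop.symm.dvd_of_dvd_mul_left ⟨k₂, hk₁.symm.trans hk₂⟩
  have hk₂' : k₂ = M₁ * k := mul_left_cancel₀ hM₂ (by linear_combination hk₁ - hk₂)
  refine ⟨hcop.mul_dvd hb₁ hb₂, k, by rw [hk₁, mul_assoc], ?_⟩
  exact (hcop₁.of_mul_right_right).mul_left (hk₂' ▸ hcop₂).of_mul_right_right

theorem exists_admissibleRoot_mul_iff (hcop : IsCoprime M₁ M₂) (hM₂ : M₂ ≠ 0) :
    (∃ m, AdmissibleRoot b c (M₁ * M₂) m) ↔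
      (∃ m, AdmissibleRoot b c M₁ m) ∧ ∃ m, AdmissibleRoot b c M₂ m := by
  refine ⟨fun ⟨m, h⟩ ↦ ⟨⟨m, h.of_mul hcop⟩, ⟨m, (mul_comm M₁ M₂ ▸ h).of_mul hcop.symm⟩⟩, ?_⟩
  rintro ⟨⟨m₁, h₁⟩, ⟨m₂, h₂⟩⟩
  obtain ⟨u, v, huv⟩ := hcop.pow (m := 2) (n := 2)
  -- Chinese remainder theorem modulo `M₁ ^ 2` and `M₂ ^ 2`.
  have hm : m₁ + M₁ ^ 2 * (u * (m₂ - m₁)) = m₂ + M₂ ^ 2 * (v * (m₁ - m₂)) := by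
    linear_combination (m₂ - m₁) * huv
  exact ⟨_, (h₁.add_mul_sq _).mul (hm ▸ h₂.add_mul_sq _) hcop hM₂⟩

end Admissible

section Coordinates

variable {τ : K} {b c : ℤ}

theorem coords_unique [Algebra ℚ K] {θ : K} (hθ : θ ∉ Set.range (algebraMap ℚ K))
    {u v u' v' : ℤ} (h : (u : K) + v * θ = u' + v' * θ) : u = u' ∧ v = v' := by
  have : CharZero K := algebraRat.charZero K
  obtain rfl : v = v' := by
    by_contra hv
    have hv' : ((v - v' : ℤ) : K) ≠ 0 := Int.cast_ne_zero.2 (sub_ne_zero.2 hv)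
    refine hθ ⟨(u' - u : ℤ) / (v - v' : ℤ), ?_⟩
    rw [map_div₀, map_intCast, map_intCast, div_eq_iff hv']
    push_cast
    linear_combination -h
  exact ⟨Int.cast_injective (add_right_cancel h), rfl⟩

theorem sub_intCast_notMem_range [Algebra ℚ K] (hτ : τ ∉ Set.range (algebraMap ℚ K)) (m : ℤ) :
    τ - m ∉ Set.range (algebraMap ℚ K) := by
  rintro ⟨q, hq⟩
  exact hτ ⟨q + m, by rw [map_add, hq, map_intCast, sub_add_cancel]⟩

variable (τ) in
def ofCoords (u v : ℤ) : Subring.closure {τ} :=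
  ⟨u + v * τ, add_mem (intCast_mem _ u) (mul_mem (intCast_mem _ v) (Subring.subset_closure rfl))⟩

@[simp]
theorem coe_ofCoords (u v : ℤ) : (ofCoords τ u v : K) = u + v * τ := rfl

theorem exists_ofCoords_eq (hτ : τ ^ 2 + b * τ + c = 0) (x : Subring.closure {τ}) :
    ∃ u v : ℤ, ofCoords τ u v = x := by
  suffices ∀ y ∈ Subring.closure {τ}, ∃ u v : ℤ, (u : K) + v * τ = y by
    obtain ⟨u, v, h⟩ := this x x.2
    exact ⟨u, v, Subtype.ext h⟩
  intro y hy
  induction hy using Subring.closure_induction with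
  | mem y hy => exact ⟨0, 1, by rw [Set.mem_singleton_iff.1 hy]; push_cast; ring⟩
  | zero => exact ⟨0, 0, by push_cast; ring⟩
  | one => exact ⟨1, 0, by push_cast; ring⟩
  | add y z _ _ hy hz =>
    obtain ⟨u, v, rfl⟩ := hy
    obtain ⟨u', v', rfl⟩ := hz
    exact ⟨u + u', v + v', by push_cast; ring⟩
  | neg y _ hy =>
    obtain ⟨u, v, rfl⟩ := hy
    exact ⟨-u, -v, by push_cast; ring⟩
  | mul y z _ _ hy hz =>
    obtain ⟨u, v, rfl⟩ := hy
    obtain ⟨u', v', rfl⟩ := hz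
    exact ⟨u * u' - c * v * v', u * v' + u' * v - b * v * v', by
      push_cast; linear_combination -(v : K) * v' * hτ⟩

theorem ofCoords_injective [Algebra ℚ K] (hirr : τ ∉ Set.range (algebraMap ℚ K)) {u v u' v' : ℤ}
    (h : ofCoords τ u v = ofCoords τ u' v') : u = u' ∧ v = v' :=
  coords_unique hirr (congrArg Subtype.val h)

theorem ofCoords_add (u v u' v' : ℤ) :
    ofCoords τ u v + ofCoords τ u' v' = ofCoords τ (u + u') (v + v') :=
  Subtype.ext (by simp only [Subring.coe_add, coe_ofCoords]; push_cast; ring)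

theorem ofCoords_mul (hτ : τ ^ 2 + b * τ + c = 0) (u v u' v' : ℤ) :
    ofCoords τ u v * ofCoords τ u' v' =
      ofCoords τ (u * u' - c * v * v') (u * v' + u' * v - b * v * v') :=
  Subtype.ext (by
    simp only [Subring.coe_mul, coe_ofCoords]; push_cast; linear_combination (v : K) * v' * hτ)

theorem ofCoords_eq_intCast_add_mul (u v : ℤ) :
    ofCoords τ u v = u + v * ofCoords τ 0 1 :=
  Subtype.ext (by simp)

theorem map_ofCoords {R : Type*} [Ring R] (f : Subring.closure {τ} →+* R) (u v : ℤ) :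
    f (ofCoords τ u v) = u + v * f (ofCoords τ 0 1) := by
  rw [ofCoords_eq_intCast_add_mul, map_add, map_mul, map_intCast, map_intCast]

variable [Algebra ℚ K]

noncomputable def coordEquiv (hτ : τ ^ 2 + b * τ + c = 0) (hirr : τ ∉ Set.range (algebraMap ℚ K)) :
    ℤ × ℤ ≃ Subring.closure {τ} :=
  Equiv.ofBijective (fun p ↦ ofCoords τ p.1 p.2)
    ⟨fun _ _ h ↦ Prod.ext_iff.2 (ofCoords_injective hirr h),
      fun x ↦ (exists_ofCoords_eq hτ x).elim fun u ⟨v, h⟩ ↦ ⟨(u, v), h⟩⟩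

theorem coordEquiv_symm_ofCoords (hτ : τ ^ 2 + b * τ + c = 0)
    (hirr : τ ∉ Set.range (algebraMap ℚ K)) (u v : ℤ) :
    (coordEquiv hτ hirr).symm (ofCoords τ u v) = (u, v) :=
  (coordEquiv hτ hirr).symm_apply_eq.2 rfl

variable (hτ : τ ^ 2 + b * τ + c = 0) (hirr : τ ∉ Set.range (algebraMap ℚ K))

noncomputable def liftOfRoot {R : Type*} [CommRing R] (r : R) (hr : r ^ 2 + b * r + c = 0) :
    Subring.closure {τ} →+* R where
  toFun x := ((coordEquiv hτ hirr).symm x).1 + ((coordEquiv hτ hirr).symm x).2 * r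
  map_one' := by
    rw [show (1 : Subring.closure {τ}) = ofCoords τ 1 0 from Subtype.ext (by simp),
      coordEquiv_symm_ofCoords]
    simp
  map_zero' := by
    rw [show (0 : Subring.closure {τ}) = ofCoords τ 0 0 from Subtype.ext (by simp),
      coordEquiv_symm_ofCoords]
    simp
  map_add' x y := by
    obtain ⟨u, v, rfl⟩ := exists_ofCoords_eq hτ x
    obtain ⟨u', v', rfl⟩ := exists_ofCoords_eq hτ y
    simp only [ofCoords_add, coordEquiv_symm_ofCoords]
    push_cast
    ring
  map_mul' x y := by
    obtain ⟨u, v, rfl⟩ := exists_ofCoords_eq hτ x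
    obtain ⟨u', v', rfl⟩ := exists_ofCoords_eq hτ y
    simp only [ofCoords_mul hτ, coordEquiv_symm_ofCoords]
    push_cast
    linear_combination -(v : R) * v' * hr

theorem liftOfRoot_ofCoords {R : Type*} [CommRing R] (r : R) (hr : r ^ 2 + b * r + c = 0)
    (u v : ℤ) : liftOfRoot hτ hirr r hr (ofCoords τ u v) = u + v * r :=
  congrArg (fun p : ℤ × ℤ ↦ (p.1 : R) + p.2 * r) (coordEquiv_symm_ofCoords hτ hirr u v)

end Coordinates

section Ideals

variable {τ : K} {b c : ℤ} {M : ℕ} {m : ℤ} {I : Ideal (Subring.closure {τ})}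

theorem exists_mem_iff_of_isPrimitiveIdeal (hprim : IsPrimitiveIdeal (Subring.closure {τ}) I)
    (hcard : Nat.card (Subring.closure {τ} ⧸ I) = M) (hM : 0 < M) :
    ∃ m : ℤ, ∀ u v : ℤ, ofCoords τ u v ∈ I ↔ (M : ℤ) ∣ u + v * m := by
  have : IsAddCyclic (Subring.closure {τ} ⧸ I) := hprim
  have : Finite (Subring.closure {τ} ⧸ I) := Nat.finite_of_card_ne_zero (hcard ▸ hM.ne')
  have : Fintype (Subring.closure {τ} ⧸ I) := Fintype.ofFinite _
  have : CharP (Subring.closure {τ} ⧸ I) M := hcard ▸ charP_natCard_of_isAddCyclic _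
  let e := ZMod.ringEquiv (Subring.closure {τ} ⧸ I) (Nat.card_eq_fintype_card.symm.trans hcard)
  obtain ⟨m, hm⟩ := ZMod.intCast_surjective (e.symm (Ideal.Quotient.mk I (ofCoords τ 0 1)))
  refine ⟨m, fun u v ↦ ?_⟩
  rw [← Ideal.Quotient.eq_zero_iff_mem, map_ofCoords, ← e.apply_symm_apply (Ideal.Quotient.mk I _),
    ← hm, map_intCast, ← Int.cast_mul, ← Int.cast_add, CharP.intCast_eq_zero_iff _ M]

theorem exists_isPrimitiveIdeal_of_dvd [Algebra ℚ K] (hτ : τ ^ 2 + b * τ + c = 0)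
    (hirr : τ ∉ Set.range (algebraMap ℚ K)) (hM : 0 < M) (hdvd : (M : ℤ) ∣ m ^ 2 + b * m + c) :
    ∃ I : Ideal (Subring.closure {τ}), IsPrimitiveIdeal (Subring.closure {τ}) I ∧
      Nat.card (Subring.closure {τ} ⧸ I) = M ∧
      ∀ u v : ℤ, ofCoords τ u v ∈ I ↔ (M : ℤ) ∣ u + v * m := by
  have : NeZero M := ⟨hM.ne'⟩
  have hr : ((m : ZMod M)) ^ 2 + b * m + c = 0 := by
    exact_mod_cast (ZMod.intCast_zmod_eq_zero_iff_dvd _ M).2 hdvd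
  let f := liftOfRoot hτ hirr (m : ZMod M) hr
  have hf : Function.Surjective f := fun r ↦
    ⟨ofCoords τ r.val 0, by simp [f, liftOfRoot_ofCoords]⟩
  let e := RingHom.quotientKerEquivOfSurjective hf
  refine ⟨RingHom.ker f, isAddCyclic_of_surjective e.symm e.symm.surjective, ?_, fun u v ↦ ?_⟩
  · rw [Nat.card_congr e.toEquiv, Nat.card_zmod]
  · rw [RingHom.mem_ker, liftOfRoot_ofCoords, ← ZMod.intCast_zmod_eq_zero_iff_dvd]
    push_cast
    rfl

theorem sub_intCast_sq_eq (hτ : τ ^ 2 + b * τ + c = 0) {t k : ℤ} (ht : b + 2 * m = M * t)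
    (hk : m ^ 2 + b * m + c = M * k) : (τ - m) ^ 2 = M * (-t * (τ - m) - k) := by
  have ht' := congrArg (Int.cast : ℤ → K) ht
  have hk' := congrArg (Int.cast : ℤ → K) hk
  push_cast at ht' hk'
  linear_combination hτ - (τ - m) * ht' - hk'

variable (hτ : τ ^ 2 + b * τ + c = 0) (hI : ∀ u v : ℤ, ofCoords τ u v ∈ I ↔ (M : ℤ) ∣ u + v * m)
include hτ hI

theorem exists_mem_coe_eq_iff (w : K) :
    (∃ z : Subring.closure {τ}, z ∈ I ∧ (z : K) = w) ↔
      ∃ α β : ℤ, (α : K) * M + β * (τ - m) = w := by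
  constructor
  · rintro ⟨z, hz, rfl⟩
    obtain ⟨u, v, rfl⟩ := exists_ofCoords_eq hτ z
    obtain ⟨α, hα⟩ := (hI u v).1 hz
    refine ⟨α, v, ?_⟩
    have hα' := congrArg (Int.cast : ℤ → K) hα
    push_cast at hα'
    rw [coe_ofCoords]
    linear_combination -hα'
  · rintro ⟨α, β, rfl⟩
    exact ⟨ofCoords τ (α * M - β * m) β, (hI _ _).2 ⟨α, by ring⟩, by
      rw [coe_ofCoords]; push_cast; ring⟩

theorem dvd_eval_of_mem_iff : (M : ℤ) ∣ m ^ 2 + b * m + c := by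
  have hτm : ofCoords τ (-m) 1 ∈ I := (hI _ _).2 ⟨0, by ring⟩
  have hmul : ofCoords τ 0 1 * ofCoords τ (-m) 1 = ofCoords τ (-c) (-m - b) := by
    rw [ofCoords_mul hτ]; congr 1 <;> ring
  have := (hI (-c) (-m - b)).1 (hmul ▸ I.mul_mem_left (ofCoords τ 0 1) hτm)
  rw [show m ^ 2 + b * m + c = -(-c + (-m - b) * m) by ring]
  exact dvd_neg.2 this

variable [Algebra ℚ K] (hirr : τ ∉ Set.range (algebraMap ℚ K))
include hirr

theorem isRealIdeal_iff {σ : K →+* K} (hστ : σ τ = -b - τ) :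
    IsRealIdeal σ (Subring.closure {τ}) I ↔ (M : ℤ) ∣ b + 2 * m := by
  have hlat := exists_mem_coe_eq_iff hτ hI
  constructor
  · intro hreal
    obtain ⟨z, hz, hzσ⟩ := hreal (ofCoords τ (-m) 1) ((hI _ _).2 ⟨0, by ring⟩)
    obtain ⟨α, β, h⟩ := (hlat _).1 ⟨z, hz, hzσ⟩
    rw [coe_ofCoords, map_add, map_mul, map_intCast, map_intCast, hστ] at h
    have h' : ((α * M : ℤ) : K) + β * (τ - m) =
        ((-(b + 2 * m) : ℤ) : K) + ((-1 : ℤ) : K) * (τ - m) := by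
      push_cast at h ⊢
      linear_combination h
    exact ⟨-α, by linear_combination (coords_unique (sub_intCast_notMem_range hirr m) h').1⟩
  · rintro ⟨t, ht⟩ y hy
    obtain ⟨α, β, hy⟩ := (hlat y).1 ⟨y, hy, rfl⟩
    refine (hlat _).2 ⟨α - β * t, -β, ?_⟩
    have ht' : (b : K) + 2 * m = M * t := by exact_mod_cast congrArg (Int.cast : ℤ → K) ht
    simp only [← hy, map_add, map_mul, map_sub, map_intCast, map_natCast, hστ]
    push_cast
    linear_combination (β : K) * ht'

theorem isCoprime_of_isProperIdeal {t k : ℤ} (ht : b + 2 * m = M * t)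
    (hk : m ^ 2 + b * m + c = M * k) (hprop : IsProperIdeal (Subring.closure {τ}) I) :
    IsCoprime (M : ℤ) k := by
  have hlat := exists_mem_coe_eq_iff hτ hI
  have hsq := sub_intCast_sq_eq hτ ht hk
  rw [Int.isCoprime_iff_gcd_eq_one]
  by_contra hg
  obtain ⟨p, hp, hpg⟩ := Nat.exists_prime_and_dvd hg
  obtain ⟨M₁, hM₁⟩ := (Int.natCast_dvd_natCast.2 hpg).trans (Int.gcd_dvd_left _ _)
  obtain ⟨k₁, hk₁⟩ := (Int.natCast_dvd_natCast.2 hpg).trans (Int.gcd_dvd_right _ _)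
  have hM₁' : (M : K) = p * M₁ := by exact_mod_cast congrArg (Int.cast : ℤ → K) hM₁
  have hk₁' : (k : K) = p * k₁ := by exact_mod_cast congrArg (Int.cast : ℤ → K) hk₁
  have hp0 : (p : K) ≠ 0 := by
    have := algebraRat.charZero K
    exact Nat.cast_ne_zero.2 hp.ne_zero
  -- `(τ - m) / p` multiplies `I = ℤ M + ℤ (τ - m)` into itself, because `p ∣ M` and `p ∣ k`.
  have hx : (τ - m) / p ∈ Subring.closure {τ} := by
    refine (hprop _).1 fun y hy ↦ (hlat _).2 ?_
    obtain ⟨α, β, hy⟩ := (hlat y).1 ⟨y, hy, rfl⟩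
    refine ⟨-β * k₁, α * M₁ - β * M₁ * t, ?_⟩
    rw [← hy, div_mul_eq_mul_div, eq_div_iff hp0]
    push_cast
    linear_combination (-β : K) * hsq - ((α - β * t) * (τ - m)) * hM₁' + β * M * hk₁'
  obtain ⟨u, v, huv⟩ := exists_ofCoords_eq hτ ⟨_, hx⟩
  have huv' := congrArg Subtype.val huv
  rw [coe_ofCoords, eq_div_iff hp0] at huv'
  have h : ((p * u : ℤ) : K) + (p * v : ℤ) * τ = ((-m : ℤ) : K) + ((1 : ℤ) : K) * τ := by
    push_cast
    linear_combination huv'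
  have hpv : (p : ℤ) * v = 1 := (coords_unique hirr h).2
  exact hp.one_lt.ne' (by exact_mod_cast Int.eq_one_of_mul_eq_one_right (by positivity) hpv)

theorem isProperIdeal_of_isCoprime (hM : M ≠ 0) {t k : ℤ} (ht : b + 2 * m = M * t)
    (hk : m ^ 2 + b * m + c = M * k) (hcop : IsCoprime (M : ℤ) k) :
    IsProperIdeal (Subring.closure {τ}) I := by
  have hlat := exists_mem_coe_eq_iff hτ hI
  have hsq := sub_intCast_sq_eq hτ ht hk
  intro x
  refine ⟨fun hx ↦ ?_, fun hx y hy ↦ ⟨⟨x, hx⟩ * y, I.mul_mem_left _ hy, rfl⟩⟩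
  obtain ⟨α, β, hxM⟩ := (hlat _).1 (hx (ofCoords τ M 0) ((hI _ _).2 ⟨1, by ring⟩))
  obtain ⟨α', β', hxτ⟩ := (hlat _).1 (hx (ofCoords τ (-m) 1) ((hI _ _).2 ⟨0, by ring⟩))
  simp only [coe_ofCoords] at hxM hxτ
  push_cast at hxM hxτ
  -- Multiplying `x (τ - m) ∈ I` by `M` and comparing constant terms gives `M ∣ β k`.
  have key : ((M * α' * M : ℤ) : K) + (M * β' : ℤ) * (τ - m) =
      ((-β * k * M : ℤ) : K) + ((α * M - β * M * t : ℤ) : K) * (τ - m) := by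
    push_cast
    linear_combination (M : K) * hxτ - (τ - m) * hxM + β * hsq
  have hconst := (coords_unique (sub_intCast_notMem_range hirr m) key).1
  obtain ⟨β₀, rfl⟩ : (M : ℤ) ∣ β := hcop.dvd_of_dvd_mul_right
    ⟨-α', mul_right_cancel₀ (Int.natCast_ne_zero.2 hM) (by linear_combination hconst)⟩
  have hMK : (M : K) ≠ 0 := by
    have := algebraRat.charZero K
    exact Nat.cast_ne_zero.2 hM
  have hx : x = ofCoords τ (α - β₀ * m) β₀ := by
    refine mul_right_cancel₀ hMK ?_
    rw [coe_ofCoords]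
    push_cast at hxM ⊢
    linear_combination -hxM
  exact hx ▸ (ofCoords τ _ _).2

end Ideals

theorem exists_isPrimitiveIdeal_isProperIdeal_isRealIdeal_iff [Algebra ℚ K] {τ : K} {b c : ℤ}
    (hτ : τ ^ 2 + b * τ + c = 0) (hirr : τ ∉ Set.range (algebraMap ℚ K)) {σ : K →+* K}
    (hστ : σ τ = -b - τ) {M : ℕ} (hM : 0 < M) :
    (∃ I : Ideal (Subring.closure {τ} : Subring K),
        IsPrimitiveIdeal (Subring.closure {τ}) I ∧ IsProperIdeal (Subring.closure {τ}) I ∧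
        IsRealIdeal σ (Subring.closure {τ}) I ∧
        Nat.card ((Subring.closure {τ} : Subring K) ⧸ I) = M) ↔
      ∃ m, AdmissibleRoot b c M m := by
  constructor
  · rintro ⟨I, hprim, hprop, hreal, hcard⟩
    obtain ⟨m, hI⟩ := exists_mem_iff_of_isPrimitiveIdeal hprim hcard hM
    obtain ⟨t, ht⟩ := (isRealIdeal_iff hτ hI hirr hστ).1 hreal
    obtain ⟨k, hk⟩ := dvd_eval_of_mem_iff hτ hI
    exact ⟨m, ⟨t, ht⟩, k, hk, isCoprime_of_isProperIdeal hτ hI hirr ht hk hprop⟩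
  · rintro ⟨m, ⟨t, ht⟩, k, hk, hcop⟩
    obtain ⟨I, hprim, hcard, hI⟩ := exists_isPrimitiveIdeal_of_dvd hτ hirr hM ⟨k, hk⟩
    exact ⟨I, hprim, isProperIdeal_of_isCoprime hτ hI hirr hM.ne' ht hk hcop,
      (isRealIdeal_iff hτ hI hirr hστ).2 ⟨t, ht⟩, hcard⟩

end QuadraticOrder

theorem exists_primitive_proper_real_iff_prime_powers_general
    (K : Type*) [Field K] [Algebra ℚ K]
    (hdim : Module.finrank ℚ K = 2)
    (σ : K →+* K) (hσ : σ ≠ RingHom.id K)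
    (τ : K) (hint : ∃ b c : ℤ, τ ^ 2 + (b : K) * τ + (c : K) = 0)
    (hirr : τ ∉ Set.range (algebraMap ℚ K))
    (N : ℕ) (hN : 0 < N) :
    (∃ I : Ideal (Subring.closure {τ} : Subring K),
        IsPrimitiveIdeal (Subring.closure {τ}) I ∧ IsProperIdeal (Subring.closure {τ}) I ∧
        IsRealIdeal σ (Subring.closure {τ}) I ∧
        Nat.card ((Subring.closure {τ} : Subring K) ⧸ I) = N) ↔
    (∀ ℓ ∈ N.primeFactors, ∃ I : Ideal (Subring.closure {τ} : Subring K),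
        IsPrimitiveIdeal (Subring.closure {τ}) I ∧ IsProperIdeal (Subring.closure {τ}) I ∧
        IsRealIdeal σ (Subring.closure {τ}) I ∧
        Nat.card ((Subring.closure {τ} : Subring K) ⧸ I) = ℓ ^ (N.factorization ℓ)) := by
  obtain ⟨b, c, hτ⟩ := hint
  have hστ := map_eq_neg_sub_of_ne_id hdim hσ hτ hirr
  have hppr {M : ℕ} (hM : 0 < M) :=
    QuadraticOrder.exists_isPrimitiveIdeal_isProperIdeal_isRealIdeal_iff hτ hirr hστ hM
  rw [hppr hN, Nat.iff_forall_primeFactors_of_coprime_mul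
    (P := fun M : ℕ ↦ ∃ m, QuadraticOrder.AdmissibleRoot b c M m) _ _ hN.ne']
  · exact forall₂_congr fun ℓ hℓ ↦ (hppr (pow_pos (Nat.prime_of_mem_primeFactors hℓ).pos _)).symm
  · exact ⟨0, isUnit_one.dvd, c, by ring, isCoprime_one_left⟩
  · intro M₁ M₂ hM₂ hcop
    push_cast
    exact QuadraticOrder.exists_admissibleRoot_mul_iff (Nat.isCoprime_iff_coprime.2 hcop)
      (by exact_mod_cast hM₂.ne')

/-- Let `𝒪 = ℤ[τ]` be an order in an imaginary quadratic field `K` with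
complex conjugation `σ`, and let `N` be a positive integer.  There is a primitive, proper,
real ideal of `𝒪` of index `N` iff for each prime `ℓᵢ ∣ N` there is a primitive, proper,
real ideal of `𝒪` of index `ℓᵢ^{aᵢ}`, where `ℓᵢ^{aᵢ} ∥ N`. -/
theorem exists_primitive_proper_real_iff_prime_powers
    (K : Type*) [Field K] [Algebra ℚ K]
    (hdim : Module.finrank ℚ K = 2) (himag : IsEmpty (K →+* ℝ))
    (σ : K →+* K) (hσ : σ ≠ RingHom.id K)
    (τ : K) (hint : ∃ b c : ℤ, τ ^ 2 + (b : K) * τ + (c : K) = 0)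
    (hirr : τ ∉ Set.range (algebraMap ℚ K))
    (N : ℕ) (hN : 0 < N) :
    (∃ I : Ideal (Subring.closure {τ} : Subring K),
        IsPrimitiveIdeal (Subring.closure {τ}) I ∧ IsProperIdeal (Subring.closure {τ}) I ∧
        IsRealIdeal σ (Subring.closure {τ}) I ∧
        Nat.card ((Subring.closure {τ} : Subring K) ⧸ I) = N) ↔
    (∀ ℓ ∈ N.primeFactors, ∃ I : Ideal (Subring.closure {τ} : Subring K),
        IsPrimitiveIdeal (Subring.closure {τ}) I ∧ IsProperIdeal (Subring.closure {τ}) I ∧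
        IsRealIdeal σ (Subring.closure {τ}) I ∧
        Nat.card ((Subring.closure {τ} : Subring K) ⧸ I) = ℓ ^ (N.factorization ℓ)) :=
  exists_primitive_proper_real_iff_prime_powers_general K hdim σ hσ τ hint hirr N hN
end

section
/- Let 𝒪 ⊆ 𝒪′ be orders in an imaginary quadratic field K, and let 𝔞 be a proper (equivalently, invertible) fractional 𝒪-ideal. Then the fractional 𝒪′-ideal 𝔞𝒪′ is a proper fractional 𝒪′-ideal, i.e., {x ∈ K : x·(𝔞𝒪′) ⊆ 𝔞𝒪′} = 𝒪′. -/
/-!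
Write `𝔞 = α(ℤ + ℤτ)` and let `aτ² + bτ + c = 0` be a primitive integral relation. Then
`(ℤ + ℤτ)(ℤa + ℤ(-b - aτ)) = ℤ + ℤaτ`: the product lies in `ℤ + ℤaτ` by the relation and
contains `a`, `b`, `c`, hence `1`. Since `ℤ + ℤaτ` maps `ℤ + ℤτ` into itself, it lies in the
multiplier ring `𝒪` of `𝔞`, so `𝔞𝔟 = 𝒪` for `𝔟 = α⁻¹(ℤa + ℤ(-b - aτ))`. Invertibility survives
extension: if `x𝔞𝒪′ ⊆ 𝔞𝒪′`, then `x𝒪′ = x𝔞𝔟𝒪′ ⊆ 𝔞𝔟𝒪′ = 𝒪𝒪′ = 𝒪′`.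
-/

variable {K : Type*} [Field K]

/-- An order in a quadratic field `K`: a subring of the form `ℤ[τ]` for a quadratic
irrationality `τ` (equivalently, a subring that is free of rank 2 over `ℤ` and spans `K`). -/
def IsQuadOrder [Algebra ℚ K] (O : Subring K) : Prop :=
  ∃ τ : K, τ ∉ Set.range (algebraMap ℚ K) ∧
    (∃ b c : ℤ, τ ^ 2 + (b : K) * τ + (c : K) = 0) ∧ O = Subring.closure {τ}

/-- `M` is a fractional `O`-ideal: a nonzero `O`-stable additive subgroup of `K` with a
common denominator in `O`. -/
def IsFracIdeal (O : Subring K) (M : Submodule ℤ K) : Prop :=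
  M ≠ ⊥ ∧ (∀ o ∈ O, ∀ m ∈ M, o * m ∈ M) ∧
    ∃ d ∈ O, d ≠ 0 ∧ ∀ m ∈ M, d * m ∈ O

/-- A fractional `O`-ideal `M` is *proper* if its multiplier ring `{x ∈ K : xM ⊆ M}`
equals `O`. -/
def IsProperFracIdeal (O : Subring K) (M : Submodule ℤ K) : Prop :=
  ∀ x : K, (∀ m ∈ M, x * m ∈ M) ↔ x ∈ O

/-- The fractional `O'`-ideal `M·O'` generated by the products of elements of `M` and `O'`. -/
def extIdeal (O' : Subring K) (M : Submodule ℤ K) : Submodule ℤ K :=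
  Submodule.span ℤ {z : K | ∃ a ∈ M, ∃ b ∈ O', z = a * b}

open Submodule

theorem exists_primitive_relation_of_not_linearIndependent {ι V : Type*} [Fintype ι]
    [AddCommGroup V] [IsAddTorsionFree V] {v : ι → V} (hv : ¬ LinearIndependent ℤ v) :
    ∃ g h : ι → ℤ, ∑ i, g i • v i = 0 ∧ ∑ i, g i * h i = 1 := by
  obtain ⟨f, hf, i, hi⟩ := Fintype.not_linearIndependent_iff.1 hv
  obtain ⟨g, hfg, hg⟩ := Finset.extract_gcd f ⟨i, Finset.mem_univ i⟩
  obtain ⟨h, hh⟩ := Finset.gcd_eq_sum_mul Finset.univ g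
  refine ⟨g, h, ?_, by rw [← hh, hg]⟩
  have hd : Finset.univ.gcd f ≠ 0 := fun h0 =>
    hi (Finset.gcd_eq_zero_iff.1 h0 i (Finset.mem_univ _))
  have : Finset.univ.gcd f • ∑ i, g i • v i = 0 := by
    simpa [Finset.smul_sum, smul_smul, ← hfg] using hf
  exact (smul_eq_zero.1 this).resolve_left hd

theorem exists_primitive_quadratic_relation [Algebra ℚ K]
    (hdim : Module.finrank ℚ K = 2) (τ : K) :
    ∃ a b c : ℤ, a * τ ^ 2 + b * τ + c = 0 ∧ ∃ u v w : ℤ, u * a + v * b + w * c = 1 := by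
  have : CharZero K := charZero_of_injective_algebraMap (algebraMap ℚ K).injective
  have : Module.Finite ℚ K := Module.finite_of_finrank_pos (by omega)
  have hdep : ¬ LinearIndependent ℤ (fun i : Fin 3 => τ ^ (i : ℕ)) := by
    rw [LinearIndependent.iff_fractionRing ℤ ℚ]
    intro hli
    simpa [hdim] using hli.fintype_card_le_finrank
  obtain ⟨g, h, hg, hh⟩ := exists_primitive_relation_of_not_linearIndependent hdep
  simp only [Fin.sum_univ_three, zsmul_eq_mul, Fin.val_zero, Fin.val_one, Fin.val_two, pow_zero,
    pow_one, mul_one] at hg hh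
  exact ⟨g 2, g 1, g 0, by linear_combination hg, h 2, h 1, h 0, by linear_combination hh⟩

section QuadraticLattice

variable {R : Type*} [CommRing R] {τ : R} {a b c : ℤ}

theorem span_one_mul_span_one_le (h : (a : R) * τ ^ 2 + b * τ + c = 0) :
    span ℤ {1, (a : R) * τ} * span ℤ {1, τ} ≤ span ℤ {1, τ} := by
  simp only [span_mul_span, span_le, Set.mul_subset_iff, Set.mem_insert_iff,
    Set.mem_singleton_iff, forall_eq_or_imp, forall_eq, SetLike.mem_coe, mem_span_pair,
    zsmul_eq_mul]
  exact ⟨⟨⟨1, 0, by ring⟩, ⟨0, 1, by ring⟩⟩, ⟨0, a, by ring⟩,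
    ⟨-c, -b, by push_cast; linear_combination -h⟩⟩

-- `-b - aτ` is `a` times the conjugate root `-b/a - τ`, written without division.
theorem span_one_mul_span_conj_le (h : (a : R) * τ ^ 2 + b * τ + c = 0) :
    span ℤ {1, τ} * span ℤ {(a : R), -b - a * τ} ≤ span ℤ {1, (a : R) * τ} := by
  simp only [span_mul_span, span_le, Set.mul_subset_iff, Set.mem_insert_iff,
    Set.mem_singleton_iff, forall_eq_or_imp, forall_eq, SetLike.mem_coe, mem_span_pair,
    zsmul_eq_mul]
  exact ⟨⟨⟨a, 0, by ring⟩, ⟨-b, -1, by push_cast; ring⟩⟩, ⟨0, 1, by ring⟩,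
    ⟨c, 0, by linear_combination h⟩⟩

theorem one_mem_span_one_mul_span_conj (h : (a : R) * τ ^ 2 + b * τ + c = 0) {u v w : ℤ}
    (huvw : u * a + v * b + w * c = 1) :
    1 ∈ span ℤ {1, τ} * span ℤ {(a : R), -b - a * τ} := by
  set P := span ℤ {1, τ} * span ℤ {(a : R), -b - a * τ}
  have hmem : ∀ x ∈ ({1, τ} : Set R), ∀ y ∈ ({(a : R), -b - a * τ} : Set R), x * y ∈ P :=
    fun x hx y hy => mul_mem_mul (subset_span hx) (subset_span hy)
  have ha : (a : R) ∈ P := by simpa using hmem 1 (by simp) a (by simp)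
  have hb : (b : R) ∈ P := by
    convert sub_mem (neg_mem (hmem 1 (by simp) (-b - a * τ) (by simp)))
      (hmem τ (by simp) a (by simp)) using 1
    ring
  have hc : (c : R) ∈ P := by
    convert hmem τ (by simp) (-b - a * τ) (by simp) using 1
    linear_combination h
  have huvw' : u • (a : R) + v • (b : R) + w • (c : R) = 1 := by
    simpa using congrArg (Int.cast (R := R)) huvw
  rw [← huvw']
  exact add_mem (add_mem (P.smul_mem u ha) (P.smul_mem v hb)) (P.smul_mem w hc)

theorem closure_singleton_subset_span_pair (h : τ ^ 2 + b * τ + c = 0) :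
    (Subring.closure {τ} : Set R) ⊆ span ℤ {1, τ} := by
  have hmul : span ℤ {1, τ} * span ℤ {1, τ} ≤ span ℤ {(1 : R), τ} := by
    have := span_one_mul_span_one_le (τ := τ) (a := 1) (b := b) (c := c) (by simpa using h)
    rwa [Int.cast_one, one_mul] at this
  let S : Subring R := ((span ℤ {(1 : R), τ}).toSubalgebra (subset_span (by simp))
    fun x y hx hy => hmul (mul_mem_mul hx hy)).toSubring
  have hτS : τ ∈ S := subset_span (by simp)
  exact Subring.closure_le.2 (Set.singleton_subset_iff.2 hτS)

end QuadraticLattice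

theorem linearIndependent_pair_mul_of_notMem_range [Algebra ℚ K] {τ m : K}
    (hτ : τ ∉ Set.range (algebraMap ℚ K)) (hm : m ≠ 0) : LinearIndependent ℚ ![m, τ * m] := by
  refine LinearIndependent.pair_iff.2 fun s t hst => ?_
  rw [Algebra.smul_def, Algebra.smul_def, ← mul_assoc, ← add_mul] at hst
  have hst := (mul_eq_zero.1 hst).resolve_right hm
  by_cases ht : t = 0
  · subst ht
    rw [map_zero, zero_mul, add_zero] at hst
    exact ⟨(map_eq_zero_iff _ (algebraMap ℚ K).injective).1 hst, rfl⟩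
  · refine (hτ ⟨-s / t, ?_⟩).elim
    have : algebraMap ℚ K t ≠ 0 := (map_ne_zero_iff _ (algebraMap ℚ K).injective).2 ht
    rw [map_div₀, map_neg, div_eq_iff this]
    linear_combination -hst

variable {O : Subring K} {M : Submodule ℤ K}

theorem IsFracIdeal.fg [Algebra ℚ K] (hO : IsQuadOrder O) (hM : IsFracIdeal O M) : M.FG := by
  obtain ⟨τ, -, ⟨b, c, hrel⟩, rfl⟩ := hO
  obtain ⟨-, -, d, -, hd0, hdM⟩ := hM
  refine ((fg_span_singleton d⁻¹).mul (fg_span (Set.toFinite {1, τ}))).of_le fun m hm =>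
    mem_span_singleton_mul.2 ⟨d * m, closure_singleton_subset_span_pair hrel (hdM m hm), ?_⟩
  field_simp

theorem IsFracIdeal.span_rat_eq_top [Algebra ℚ K] (hdim : Module.finrank ℚ K = 2)
    (hO : IsQuadOrder O) (hM : IsFracIdeal O M) : span ℚ (M : Set K) = ⊤ := by
  obtain ⟨τ, hτ, -, rfl⟩ := hO
  obtain ⟨hM0, hstab, -⟩ := hM
  obtain ⟨m, hm, hm0⟩ := exists_mem_ne_zero_of_ne_bot hM0
  have : Module.Finite ℚ K := Module.finite_of_finrank_pos (by omega)
  have hli := linearIndependent_pair_mul_of_notMem_range hτ hm0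
  refine eq_top_iff.2 ((hli.span_eq_top_of_card_eq_finrank' (by simp [hdim])).ge.trans
    (span_mono ?_))
  simp only [Set.range_subset_iff, Fin.forall_fin_two]
  exact ⟨hm, hstab τ (Subring.subset_closure rfl) m hm⟩

theorem IsFracIdeal.exists_eq_span_singleton_mul [Algebra ℚ K] (hdim : Module.finrank ℚ K = 2)
    (hO : IsQuadOrder O) (hM : IsFracIdeal O M) :
    ∃ α τ : K, α ≠ 0 ∧ M = span ℤ {α} * span ℤ {1, τ} := by
  have : Module.Finite ℚ K := Module.finite_of_finrank_pos (by omega)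
  have : IsLattice ℚ M := ⟨hM.fg hO, hM.span_rat_eq_top hdim hO⟩
  have hrank : Module.finrank ℤ M = 2 := by
    refine Module.finrank_eq_of_rank_eq ?_
    rw [IsLattice.rank' ℚ M, ← Module.finrank_eq_rank, hdim, Nat.cast_ofNat]
  let B := Module.finBasisOfFinrankEq ℤ M hrank
  have hα : (B 0 : K) ≠ 0 := by simpa using B.ne_zero 0
  refine ⟨B 0, B 1 / B 0, hα, ?_⟩
  rw [span_mul_span, Set.singleton_mul, Set.image_pair, mul_one, mul_div_cancel₀ _ hα]
  have hB : M.subtype ∘ B = ![(B 0 : K), B 1] := by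
    ext i; fin_cases i <;> rfl
  have := congrArg (map M.subtype) B.span_eq
  rwa [map_span, map_subtype_top, ← Set.range_comp, hB, Matrix.range_cons_cons_empty,
    eq_comm] at this

theorem IsProperFracIdeal.exists_mul_eq [Algebra ℚ K] (hdim : Module.finrank ℚ K = 2)
    (hO : IsQuadOrder O) (hM : IsFracIdeal O M) (hprop : IsProperFracIdeal O M) :
    ∃ N : Submodule ℤ K, M * N = O.toAddSubgroup.toIntSubmodule := by
  obtain ⟨α, τ, hα, hMτ⟩ := hM.exists_eq_span_singleton_mul hdim hO
  obtain ⟨a, b, c, hrel, u, v, w, huvw⟩ := exists_primitive_quadratic_relation hdim τ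
  set N := span ℤ {α⁻¹} * span ℤ {(a : K), -b - a * τ}
  have hMN : M * N = span ℤ {1, τ} * span ℤ {(a : K), -b - a * τ} := by
    rw [hMτ, mul_mul_mul_comm, span_mul_span, Set.singleton_mul_singleton, mul_inv_cancel₀ hα,
      ← one_eq_span, one_mul]
  have hmult : span ℤ {1, (a : K) * τ} ≤ O.toAddSubgroup.toIntSubmodule := fun y hy =>
    (hprop y).1 fun m hm => by
      refine (?_ : span ℤ {1, (a : K) * τ} * M ≤ M) (mul_mem_mul hy hm)
      rw [hMτ, mul_left_comm]
      exact mul_le_mul' le_rfl (span_one_mul_span_one_le hrel)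
  refine ⟨N, le_antisymm (hMN ▸ (span_one_mul_span_conj_le hrel).trans hmult) fun o ho => ?_⟩
  have hOM : O.toAddSubgroup.toIntSubmodule * M ≤ M := mul_le.2 hM.2.1
  have : o * 1 ∈ O.toAddSubgroup.toIntSubmodule * (M * N) :=
    mul_mem_mul ho (hMN ▸ one_mem_span_one_mul_span_conj hrel huvw)
  rw [mul_one, ← mul_assoc] at this
  exact mul_le_mul_left hOM N this

theorem extIdeal_eq_mul (O' : Subring K) (M : Submodule ℤ K) :
    extIdeal O' M = M * O'.toAddSubgroup.toIntSubmodule := by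
  rw [extIdeal, mul_eq_span_mul_set]
  congr 1
  ext z
  simp only [Set.mem_ofPred_eq, Set.mem_mul, SetLike.mem_coe, eq_comm]
  rfl

theorem isProperFracIdeal_extIdeal_of_mul_eq {O O' : Subring K} (hle : O ≤ O')
    {N : Submodule ℤ K} (hMN : M * N = O.toAddSubgroup.toIntSubmodule) :
    IsProperFracIdeal O' (extIdeal O' M) := by
  set O₀ := O.toAddSubgroup.toIntSubmodule
  set O₀' := O'.toAddSubgroup.toIntSubmodule
  have hOO' : O₀ * O₀' ≤ O₀' := mul_le.2 fun x hx y hy => O'.mul_mem (hle hx) hy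
  have hO'O' : O₀' * O₀' ≤ O₀' := mul_le.2 fun x hx y hy => O'.mul_mem hx hy
  intro x
  rw [extIdeal_eq_mul]
  constructor
  · intro hx
    have hxI : span ℤ {x} * (M * O₀') ≤ M * O₀' := mul_le.2 fun y hy n hn => by
      obtain ⟨k, rfl⟩ := mem_span_singleton.1 hy
      rw [smul_mul_assoc]
      exact smul_mem _ k (hx n hn)
    have h1 : (1 : K) ∈ M * N := hMN ▸ O.one_mem
    have hx1 : x * 1 * 1 ∈ span ℤ {x} * (M * N) * O₀' :=
      mul_mem_mul (mul_mem_mul (mem_span_singleton_self x) h1) O'.one_mem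
    rw [mul_one, mul_one] at hx1
    have hxO' : span ℤ {x} * (M * N) * O₀' ≤ O₀' :=
      calc span ℤ {x} * (M * N) * O₀' = span ℤ {x} * (M * O₀') * N := by ring
        _ ≤ M * O₀' * N := mul_le_mul_left hxI N
        _ = O₀ * O₀' := by rw [← hMN]; ring
        _ ≤ O₀' := hOO'
    exact hxO' hx1
  · intro hx m hm
    rw [mul_comm x m]
    exact mul_le_mul_right hO'O' M (by rw [← mul_assoc]; exact mul_mem_mul hm hx)

theorem extIdeal_isProper_general
    (K : Type*) [Field K] [Algebra ℚ K]
    (hdim : Module.finrank ℚ K = 2)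
    (O O' : Subring K) (hO : IsQuadOrder O) (hle : O ≤ O')
    (M : Submodule ℤ K) (hfrac : IsFracIdeal O M) (hprop : IsProperFracIdeal O M) :
    IsProperFracIdeal O' (extIdeal O' M) := by
  obtain ⟨N, hMN⟩ := hprop.exists_mul_eq hdim hO hfrac
  exact isProperFracIdeal_extIdeal_of_mul_eq hle hMN

/-- Let `𝒪 ⊆ 𝒪′` be orders in an imaginary quadratic field `K` and `𝔞` a
proper fractional `𝒪`-ideal.  Then `𝔞𝒪′` is a proper fractional `𝒪′`-ideal, i.e.
`{x ∈ K : x·(𝔞𝒪′) ⊆ 𝔞𝒪′} = 𝒪′`. -/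
theorem extIdeal_isProper
    (K : Type*) [Field K] [Algebra ℚ K]
    (hdim : Module.finrank ℚ K = 2) (himag : IsEmpty (K →+* ℝ))
    (O O' : Subring K) (hO : IsQuadOrder O) (hO' : IsQuadOrder O') (hle : O ≤ O')
    (M : Submodule ℤ K) (hfrac : IsFracIdeal O M) (hprop : IsProperFracIdeal O M) :
    IsProperFracIdeal O' (extIdeal O' M) :=
  extIdeal_isProper_general K hdim O O' hO hle M hfrac hprop
end

section
/- Let Λ ⊆ Λ′ be two lattices (rank-2 ℤ-submodules spanning K over ℚ) in an imaginary quadratic field K with [Λ′ : Λ] = ℓ a prime, and let 𝒪 = ℤ + 𝔣𝒪_K and 𝒪′ = ℤ + 𝔣′𝒪_K be their respective multiplier rings (orders of conductors 𝔣, 𝔣′). Then 𝔣 divides ℓ𝔣′ and 𝔣′ divides ℓ𝔣; in particular 𝔣/𝔣′ ∈ {1/ℓ, 1, ℓ}. -/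
/-!
Since `[Λ' : Λ] = ℓ`, we have `ℓΛ' ⊆ Λ ⊆ Λ'`, so `ℓ` times a multiplier of either lattice is a
multiplier of the other. Hence `ℤ + ℓf𝒪_K ⊆ ℤ + f'𝒪_K` and `ℤ + ℓf'𝒪_K ⊆ ℤ + f𝒪_K`.
An inclusion `ℤ + m𝒪_K ⊆ ℤ + n𝒪_K` forces `n ∣ m`: it says `m(𝒪_K/ℤ) ⊆ n(𝒪_K/ℤ)`, and
`𝒪_K/ℤ` is a nonzero free `ℤ`-module, being finitely generated and torsion-free because `ℤ` is
integrally closed. Finally `f ∣ ℓf'` and `f' ∣ ℓf` give `ℓf' = fk` with `k ∣ ℓ²`.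
-/

variable {K : Type*} [Field K]

/-- The order `ℤ + f·𝒪_K` of conductor `f` in `K`. -/
noncomputable def condOrder (K : Type*) [Field K] (f : ℕ) : Subring K :=
  Subring.closure ((fun y : K => (f : K) * y) '' (integralClosure ℤ K : Set K))

/-- A lattice in a quadratic field `K`: a finitely generated `ℤ`-submodule spanning `K`
over `ℚ` (every element of `K` has a nonzero integer multiple in it). -/
def IsLattice (Λ : Submodule ℤ K) : Prop :=
  Λ.FG ∧ ∀ x : K, ∃ n : ℤ, n ≠ 0 ∧ (n : K) * x ∈ Λ

open Module

theorem Submodule.nsmul_card_quotient_comap_subtype_mem {R M : Type*} [Ring R] [AddCommGroup M]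
    [Module R M] (N N' : Submodule R M) {x : M} (hx : x ∈ N') :
    Nat.card (N' ⧸ N.comap N'.subtype) • x ∈ N := by
  have h := card_nsmul_eq_zero' (G := N' ⧸ N.comap N'.subtype) (x := Submodule.Quotient.mk ⟨x, hx⟩)
  rwa [← Submodule.Quotient.mk_smul, Submodule.Quotient.mk_eq_zero] at h

theorem dvd_of_forall_exists_smul_eq_smul {R M : Type*} [CommRing R] [AddCommGroup M]
    [Module R M] [Module.Free R M] [Nontrivial M] {m n : R} (h : ∀ x : M, ∃ y, m • x = n • y) :
    n ∣ m := by
  let b := Module.Free.chooseBasis R M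
  obtain ⟨i⟩ := b.index_nonempty
  obtain ⟨y, hy⟩ := h (b i)
  refine ⟨b.repr y i, ?_⟩
  simpa using congr($(congrArg b.repr hy) i)

section ConductorOrder

variable (f : ℕ)

theorem mem_condOrder_iff {x : K} :
    x ∈ condOrder K f ↔ ∃ a : ℤ, ∃ t ∈ integralClosure ℤ K, x = a + f * t := by
  refine ⟨fun hx => ?_, ?_⟩
  · induction hx using Subring.closure_induction with
    | mem y hy =>
      obtain ⟨t, ht, rfl⟩ := hy
      exact ⟨0, t, ht, by simp⟩
    | zero => exact ⟨0, 0, zero_mem _, by simp⟩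
    | one => exact ⟨1, 0, zero_mem _, by simp⟩
    | add u v _ _ ihu ihv =>
      obtain ⟨a, t, ht, rfl⟩ := ihu
      obtain ⟨b, s, hs, rfl⟩ := ihv
      exact ⟨a + b, t + s, add_mem ht hs, by push_cast; ring⟩
    | neg u _ ihu =>
      obtain ⟨a, t, ht, rfl⟩ := ihu
      exact ⟨-a, -t, neg_mem ht, by push_cast; ring⟩
    | mul u v _ _ ihu ihv =>
      obtain ⟨a, t, ht, rfl⟩ := ihu
      obtain ⟨b, s, hs, rfl⟩ := ihv
      refine ⟨a * b, b * t + a * s + f * (t * s), ?_, by push_cast; ring⟩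
      exact add_mem (add_mem (mul_mem (intCast_mem _ b) ht) (mul_mem (intCast_mem _ a) hs))
        (mul_mem (natCast_mem _ f) (mul_mem ht hs))
  · rintro ⟨a, t, ht, rfl⟩
    exact add_mem (intCast_mem _ a) (Subring.subset_closure ⟨t, ht, rfl⟩)

theorem natCast_mul_mem_condOrder {θ : K} (hθ : θ ∈ integralClosure ℤ K) :
    (f : K) * θ ∈ condOrder K f :=
  Subring.subset_closure ⟨θ, hθ, rfl⟩

theorem condOrder_mul_le {ℓ f' : ℕ} (h : ∀ x ∈ condOrder K f, (ℓ : K) * x ∈ condOrder K f') :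
    condOrder K (ℓ * f) ≤ condOrder K f' := by
  refine Subring.closure_le.mpr ?_
  rintro _ ⟨θ, hθ, rfl⟩
  show _ ∈ condOrder K f'
  simpa only [Nat.cast_mul, mul_assoc] using h _ (natCast_mul_mem_condOrder f hθ)

end ConductorOrder

section Quotient

variable (K) [Algebra ℚ K]

local notation "𝒪" => integralClosure ℤ K
local notation "ℤ𝒪" => LinearMap.range (Algebra.linearMap ℤ 𝒪)

instance isTorsionFree_integralClosure_quotient_int : IsTorsionFree ℤ (𝒪 ⧸ ℤ𝒪) := by
  refine .of_smul_eq_zero fun c q hcq => or_iff_not_imp_left.mpr fun hc => ?_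
  obtain ⟨θ, rfl⟩ := Submodule.Quotient.mk_surjective _ q
  rw [← Submodule.Quotient.mk_smul, Submodule.Quotient.mk_eq_zero] at hcq
  obtain ⟨a, ha⟩ := hcq
  have hθ : (θ : K) = algebraMap ℚ K (a / c) := by
    have hcθ : (a : K) = c * θ := by simpa using congrArg Subtype.val ha
    have := charZero_of_injective_algebraMap (algebraMap ℚ K).injective
    rw [map_div₀, map_intCast, map_intCast, hcθ, mul_div_cancel_left₀ _ (Int.cast_ne_zero.mpr hc)]
  obtain ⟨b, hb⟩ := IsIntegrallyClosed.isIntegral_iff.mp <|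
    (isIntegral_algebraMap_iff (algebraMap ℚ K).injective).mp (hθ ▸ θ.2)
  rw [Submodule.Quotient.mk_eq_zero]
  exact ⟨b, Subtype.ext <| by simp [hθ, ← hb]⟩

theorem nontrivial_integralClosure_quotient_int [FiniteDimensional ℚ K]
    (hK : 1 < finrank ℚ K) : Nontrivial (𝒪 ⧸ ℤ𝒪) := by
  obtain ⟨x, hx⟩ : ∃ x : K, x ∉ (⊥ : Subalgebra ℚ K) := by
    by_contra! h
    have := Subalgebra.bot_eq_top_iff_finrank_eq_one.mp (eq_top_iff.mpr fun x _ => h x)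
    omega
  obtain ⟨y, hy, hyx⟩ := ((IsFractionRing.isAlgebraic_iff ℤ ℚ K).mpr
    (IsAlgebraic.of_finite ℚ x)).exists_integral_multiple
  refine Submodule.Quotient.nontrivial_iff.mpr fun htop => hx ?_
  obtain ⟨b, hb⟩ := htop.ge (Submodule.mem_top (x := ⟨y • x, hyx⟩))
  have hb : (b : K) = y * x := by simpa using congrArg Subtype.val hb
  have := charZero_of_injective_algebraMap (algebraMap ℚ K).injective
  refine Algebra.mem_bot.mpr ⟨b / y, ?_⟩
  rw [map_div₀, map_intCast, map_intCast, hb, mul_div_cancel_left₀ _ (Int.cast_ne_zero.mpr hy)]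

theorem dvd_of_condOrder_le [FiniteDimensional ℚ K] (hK : 1 < finrank ℚ K) {m n : ℕ}
    (h : condOrder K m ≤ condOrder K n) : n ∣ m := by
  have := nontrivial_integralClosure_quotient_int K hK
  have : Module.Finite ℤ 𝒪 := IsIntegralClosure.finite ℤ ℚ K _
  suffices ∀ q : 𝒪 ⧸ ℤ𝒪, ∃ r, (m : ℤ) • q = (n : ℤ) • r from
    Int.natCast_dvd_natCast.mp (dvd_of_forall_exists_smul_eq_smul this)
  intro q
  obtain ⟨θ, rfl⟩ := Submodule.Quotient.mk_surjective _ q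
  obtain ⟨a, τ, hτ, hmθ⟩ := (mem_condOrder_iff n).mp (h (natCast_mul_mem_condOrder m θ.2))
  refine ⟨Submodule.Quotient.mk ⟨τ, hτ⟩, ?_⟩
  rw [← Submodule.Quotient.mk_smul, ← Submodule.Quotient.mk_smul, Submodule.Quotient.eq]
  exact ⟨a, Subtype.ext <| by simp [hmθ]⟩

end Quotient

theorem div_eq_inv_or_one_or_self_of_dvd_mul {ℓ f f' : ℕ} (hℓ : ℓ.Prime) (hf : f ≠ 0)
    (h₁ : f ∣ ℓ * f') (h₂ : f' ∣ ℓ * f) :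
    (f : ℚ) / f' = 1 / ℓ ∨ (f : ℚ) / f' = 1 ∨ (f : ℚ) / f' = ℓ := by
  obtain ⟨k, hk⟩ := h₁
  obtain ⟨j, hj⟩ := h₂
  have hf' : f' ≠ 0 := by rintro rfl; simp [hℓ.ne_zero, hf] at hj
  have hkj : k * j = ℓ ^ 2 := by
    refine mul_left_cancel₀ (mul_ne_zero hf hf') ?_
    calc f * f' * (k * j) = (f * k) * (f' * j) := by ring
      _ = f * f' * ℓ ^ 2 := by rw [← hk, ← hj]; ring
  obtain ⟨i, hi, rfl⟩ := (Nat.dvd_prime_pow hℓ).mp (Dvd.intro j hkj)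
  have hℓ₀ : (ℓ : ℚ) ≠ 0 := by exact_mod_cast hℓ.ne_zero
  have hratio : (f : ℚ) / f' = ℓ / ℓ ^ i := by
    rw [div_eq_div_iff (by exact_mod_cast hf') (pow_ne_zero _ hℓ₀)]
    exact_mod_cast hk.symm
  interval_cases i
  · exact .inr <| .inr <| by rw [hratio, pow_zero, div_one]
  · exact .inr <| .inl <| by rw [hratio, pow_one, div_self hℓ₀]
  · exact .inl <| by rw [hratio]; field_simp

theorem conductor_dvd_of_index_prime_general
    (K : Type*) [Field K] [Algebra ℚ K]
    (hdim : Module.finrank ℚ K = 2)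
    (ℓ : ℕ) (hℓ : ℓ.Prime)
    (Λ Λ' : Submodule ℤ K) (hle : Λ ≤ Λ')
    (hindex : Nat.card (Λ' ⧸ (Λ.comap Λ'.subtype)) = ℓ)
    (f f' : ℕ) (hf : 0 < f)
    (hmul : ∀ x : K, (∀ m ∈ Λ, x * m ∈ Λ) ↔ x ∈ condOrder K f)
    (hmul' : ∀ x : K, (∀ m ∈ Λ', x * m ∈ Λ') ↔ x ∈ condOrder K f') :
    (f : ℤ) ∣ (ℓ : ℤ) * (f' : ℤ) ∧ (f' : ℤ) ∣ (ℓ : ℤ) * (f : ℤ) ∧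
      ((f : ℚ) / (f' : ℚ) = 1 / (ℓ : ℚ) ∨ (f : ℚ) / (f' : ℚ) = 1 ∨
        (f : ℚ) / (f' : ℚ) = (ℓ : ℚ)) := by
  have : FiniteDimensional ℚ K := .of_finrank_eq_succ hdim
  have hK : 1 < finrank ℚ K := by omega
  have hℓΛ' : ∀ y ∈ Λ', (ℓ : K) * y ∈ Λ := fun y hy => by
    simpa [hindex, nsmul_eq_mul] using Λ.nsmul_card_quotient_comap_subtype_mem Λ' hy
  have hle₁ : condOrder K (ℓ * f) ≤ condOrder K f' :=
    condOrder_mul_le f fun x hx => (hmul' _).mp fun m hm => by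
      rw [mul_assoc, mul_left_comm]
      exact hle ((hmul x).mpr hx _ (hℓΛ' m hm))
  have hle₂ : condOrder K (ℓ * f') ≤ condOrder K f :=
    condOrder_mul_le f' fun x hx => (hmul _).mp fun m hm => by
      rw [mul_assoc]
      exact hℓΛ' _ ((hmul' x).mpr hx _ (hle hm))
  have hdvd₁ := dvd_of_condOrder_le K hK hle₂
  have hdvd₂ := dvd_of_condOrder_le K hK hle₁
  exact ⟨mod_cast hdvd₁, mod_cast hdvd₂,
    div_eq_inv_or_one_or_self_of_dvd_mul hℓ hf.ne' hdvd₁ hdvd₂⟩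

/-- Let `Λ ⊆ Λ′` be lattices in an imaginary quadratic field `K` with
`[Λ′ : Λ] = ℓ` prime, and suppose their multiplier rings are the orders of conductors
`f` and `f′`.  Then `f ∣ ℓf′` and `f′ ∣ ℓf`; in particular `f/f′ ∈ {1/ℓ, 1, ℓ}`. -/
theorem conductor_dvd_of_index_prime
    (K : Type*) [Field K] [Algebra ℚ K]
    (hdim : Module.finrank ℚ K = 2) (himag : IsEmpty (K →+* ℝ))
    (ℓ : ℕ) (hℓ : ℓ.Prime)
    (Λ Λ' : Submodule ℤ K) (hΛ : IsLattice Λ) (hΛ' : IsLattice Λ') (hle : Λ ≤ Λ')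
    (hindex : Nat.card (Λ' ⧸ (Λ.comap Λ'.subtype)) = ℓ)
    (f f' : ℕ) (hf : 0 < f) (hf' : 0 < f')
    (hmul : ∀ x : K, (∀ m ∈ Λ, x * m ∈ Λ) ↔ x ∈ condOrder K f)
    (hmul' : ∀ x : K, (∀ m ∈ Λ', x * m ∈ Λ') ↔ x ∈ condOrder K f') :
    (f : ℤ) ∣ (ℓ : ℤ) * (f' : ℤ) ∧ (f' : ℤ) ∣ (ℓ : ℤ) * (f : ℤ) ∧
      ((f : ℚ) / (f' : ℚ) = 1 / (ℓ : ℚ) ∨ (f : ℚ) / (f' : ℚ) = 1 ∨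
        (f : ℚ) / (f' : ℚ) = (ℓ : ℚ)) :=
  conductor_dvd_of_index_prime_general K hdim ℓ hℓ Λ Λ' hle hindex f f' hf hmul hmul'
end
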